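/- arXiv:1809.03223 — 2 statements merged into one kernel-verified Lean document; each statement's English description precedes it below -/
import Mathlib

section
/- Assume N is even, N ≥ 4, and that K contains an element √−1 with (√−1)² = −1. Set n̂ := (N−2)/2, θ(i) := i+1 for i ∈ {0,…,N−1}, and γ'(i) := N−i for i ∈ {1,…,N−1}. Assume p(θ(0)) = 1, p(θ(n̂+1)) = 0, and p(θ(i)) = p(θ(γ'(i))) for all i ∈ {1,…,N−1}. Define g' : {1,…,N−1} → {1,−1} by g'(j) := 1 for j ≤ n̂+1 and g'(i) := (−1)^{p(θ(i))} for i ≥ n̂+2 (so g'(i)·g'(γ'(i)) = (−1)^{p(θ(i))}). Let ψ be the K-linear map on M_N(K) defined on matrix units by: ψ(e_{θ(0)θ(0)}) := −e_{θ(0)θ(0)}; ψ(e_{θ(i)θ(0)}) := −√−1·g'(γ'(i))·e_{θ(0)θ(γ'(i))} for i ∈ {1,…,N−1}; ψ(e_{θ(0)θ(j)}) := −√−1·g'(j)·e_{θ(γ'(j))θ(0)} for j ∈ {1,…,N−1}; ψ(e_{θ(i)θ(j)}) := −(−1)^{p(θ(j))(p(θ(i))+p(θ(j)))} g'(i) g'(j)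 e_{θ(γ'(j))θ(γ'(i))} for i, j ∈ {1,…,N−1}. Then: (a) ψ∘ψ∘ψ∘ψ = id but ψ∘ψ ≠ id; (b) ψ maps every matrix homogeneous of parity a to a matrix homogeneous of parity a, and ψ([X,Y]) = [ψ(X),ψ(Y)] for all X, Y ∈ M_N(K); (c) str_p(ψ(X)) = −str_p(X) for all X, so that ψ(sl_p) = sl_p; (d) ψ(1_N) = −1_N, where 1_N is the identity matrix. -/
open Matrix

/-- The supertrace associated to a parity map `p`. -/
def strP (K : Type*) [Field K] {N : ℕ} (p : Fin N → ℕ) (X : Matrix (Fin N) (Fin N) K) : K :=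
  ∑ i, (-1 : K) ^ (p i) * X i i

/-- The odd part of a matrix: keep the entries in odd positions. -/
def oddPart (K : Type*) [Field K] {N : ℕ} (p : Fin N → ℕ)
    (X : Matrix (Fin N) (Fin N) K) : Matrix (Fin N) (Fin N) K :=
  Matrix.of fun i j => if (p i + p j) % 2 = 1 then X i j else 0

/-- The super-bracket, as a bilinear map on all of `M_N(K)`.  On homogeneous
elements of parities `a`, `b` it equals `XY − (−1)^{ab} YX`; the closed bilinear
formula is `[X,Y] = XY − YX + 2·(oddPart Y)·(oddPart X)`. -/
def sbr (K : Type*) [Field K] {N : ℕ} (p : Fin N → ℕ)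
    (X Y : Matrix (Fin N) (Fin N) K) : Matrix (Fin N) (Fin N) K :=
  X * Y - Y * X + (2 : K) • (oddPart K p Y * oddPart K p X)

/-- `X` is homogeneous of parity `a`. -/
def IsHomog (K : Type*) [Field K] {N : ℕ} (p : Fin N → ℕ) (a : ℕ)
    (X : Matrix (Fin N) (Fin N) K) : Prop :=
  ∀ i j, (p i + p j) % 2 ≠ a % 2 → X i j = 0

/-- The index map `γ'(i) = N−i` on `{1,…,N−1}` (written on 0-based `θ`-indices;
it fixes `0`). -/
def gamP {N : ℕ} (k : Fin N) : Fin N :=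
  ⟨(N - (k : ℕ)) % N, Nat.mod_lt _ k.pos⟩

/-- The sign function `g'` : `g'(j) = 1` for `j ≤ n̂+1 = N/2`, and
`g'(j) = (−1)^{p(θ(j))}` for `j ≥ n̂+2`. -/
def gSignP (K : Type*) [Field K] {N : ℕ} (p : Fin N → ℕ) (j : Fin N) : K :=
  if (j : ℕ) ≤ N / 2 then 1 else (-1 : K) ^ (p j)

/-- The `K`-linear map `ψ`, written entrywise (indices are the 0-based
`θ`-indices, so `θ(i)` corresponds to `i : Fin N`). -/
def psiMap (K : Type*) [Field K] {N : ℕ} [NeZero N] (rt : K) (p : Fin N → ℕ)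
    (X : Matrix (Fin N) (Fin N) K) : Matrix (Fin N) (Fin N) K :=
  Matrix.of fun k l =>
    if k = 0 then
      (if l = 0 then -X 0 0
       else -(rt * gSignP K p l * X (gamP l) 0))
    else
      (if l = 0 then -(rt * gSignP K p (gamP k) * X 0 (gamP k))
       else -((-1 : K) ^ (p (gamP k) * (p (gamP l) + p (gamP k)))
              * gSignP K p (gamP l) * gSignP K p (gamP k) * X (gamP l) (gamP k)))

section Aux

variable {N : ℕ} [NeZero N]

lemma gamP_zero : gamP (0 : Fin N) = 0 := by
  have hN := Nat.pos_of_ne_zero (NeZero.ne N)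
  simp [gamP, Fin.ext_iff, Fin.val_zero]

lemma gamP_val {k : Fin N} (hk : k ≠ 0) : (gamP k : ℕ) = N - (k : ℕ) := by
  have h1 : 1 ≤ (k : ℕ) := by
    rcases Nat.eq_zero_or_pos (k : ℕ) with h | h
    · exact absurd (Fin.ext h) hk
    · exact h
  have h2 : (k : ℕ) < N := k.isLt
  simp only [gamP]
  exact Nat.mod_eq_of_lt (by omega)

lemma gamP_gamP (k : Fin N) : gamP (gamP k) = k := by
  by_cases hk : k = 0
  · subst hk; rw [gamP_zero, gamP_zero]
  · have h1 : 1 ≤ (k : ℕ) := by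
      rcases Nat.eq_zero_or_pos (k : ℕ) with h | h
      · exact absurd (Fin.ext h) hk
      · exact h
    have h2 : (k : ℕ) < N := k.isLt
    have hg : gamP k ≠ 0 := by
      intro h
      have := congrArg Fin.val h
      rw [gamP_val hk] at this
      simp at this; omega
    apply Fin.ext
    rw [gamP_val hg, gamP_val hk]
    omega

lemma gamP_eq_zero_iff {k : Fin N} : gamP k = 0 ↔ k = 0 := by
  constructor
  · intro h; have := congrArg gamP h; rwa [gamP_gamP, gamP_zero] at this
  · intro h; subst h; exact gamP_zero

def gamEquiv (N : ℕ) [NeZero N] : Equiv.Perm (Fin N) :=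
  Function.Involutive.toPerm gamP gamP_gamP

lemma gamEquiv_apply (k : Fin N) : gamEquiv N k = gamP k := rfl

end Aux
set_option linter.unusedSectionVars false

section Aux2

variable {K : Type*} [Field K] {N : ℕ} [NeZero N]
variable {p : Fin N → ℕ}

lemma p_gamP (hsym : ∀ k : Fin N, k ≠ 0 → p (gamP k) = p k) (k : Fin N) :
    p (gamP k) = p k := by
  by_cases hk : k = 0
  · subst hk; rw [gamP_zero]
  · exact hsym k hk

lemma gSign_cases (j : Fin N) : gSignP K p j = 1 ∨ gSignP K p j = -1 := by
  unfold gSignP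
  split
  · left; rfl
  · rcases Nat.even_or_odd (p j) with h | h
    · left; exact h.neg_one_pow
    · right; exact h.neg_one_pow

lemma gSign_sq (j : Fin N) : gSignP K p j * gSignP K p j = 1 := by
  rcases gSign_cases (K := K) (p := p) j with h | h <;> rw [h] <;> norm_num

lemma gSign_ne_zero (j : Fin N) : gSignP K p j ≠ 0 := by
  rcases gSign_cases (K := K) (p := p) j with h | h <;> rw [h] <;> norm_num

lemma gSign_gamP (hNeven : N % 2 = 0) (hN : 4 ≤ N)
    (hpmid : p ⟨N / 2, by omega⟩ = 0)
    (hsym : ∀ k : Fin N, k ≠ 0 → p (gamP k) = p k)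
    {k : Fin N} (hk : k ≠ 0) :
    gSignP K p (gamP k) = (-1 : K) ^ (p k) * gSignP K p k := by
  have h1 : 1 ≤ (k : ℕ) := by
    rcases Nat.eq_zero_or_pos (k : ℕ) with h | h
    · exact absurd (Fin.ext h) hk
    · exact h
  have h2 : (k : ℕ) < N := k.isLt
  have hgv : (gamP k : ℕ) = N - (k : ℕ) := gamP_val hk
  have hps : p (gamP k) = p k := hsym k hk
  rcases lt_trichotomy (k : ℕ) (N / 2) with h | h | h
  · -- k < N/2, so gamP k > N/2
    have hle : ¬ ((gamP k : ℕ) ≤ N / 2) := by rw [hgv]; omega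
    have hg1 : gSignP K p k = 1 := by unfold gSignP; rw [if_pos (by omega)]
    have hg2 : gSignP K p (gamP k) = (-1 : K) ^ (p (gamP k)) := by
      unfold gSignP; rw [if_neg hle]
    rw [hg1, hg2, hps, mul_one]
  · -- k = N/2 : gamP k = k, p k = 0
    have hkk : k = ⟨N / 2, by omega⟩ := Fin.ext (by simpa using h)
    have hgk : gamP k = k := Fin.ext (by rw [hgv]; omega)
    rw [hgk, hkk, hpmid, pow_zero, one_mul]
  · -- k > N/2, so gamP k < N/2
    have hle : (gamP k : ℕ) ≤ N / 2 := by rw [hgv]; omega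
    have hg1 : gSignP K p k = (-1 : K) ^ (p k) := by
      unfold gSignP; rw [if_neg (by omega)]
    have hg2 : gSignP K p (gamP k) = 1 := by
      unfold gSignP; rw [if_pos hle]
    rw [hg1, hg2, ← pow_add]
    have : (-1 : K) ^ (p k + p k) = 1 := Even.neg_one_pow ⟨p k, rfl⟩
    rw [this]

end Aux2
section Aux3

variable {K : Type*} [Field K] [CharZero K] {N : ℕ} [NeZero N]
variable {rt : K} {p : Fin N → ℕ}

lemma gSign_sq' (j : Fin N) : (gSignP K p j) ^ 2 = 1 := by
  rw [pow_two]; exact gSign_sq j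

lemma psi_sq (hN : 4 ≤ N) (hNeven : N % 2 = 0) (hrt : rt ^ 2 = -1)
    (hp : ∀ i, p i ≤ 1) (hpmid : p ⟨N / 2, by omega⟩ = 0)
    (hsym : ∀ k : Fin N, k ≠ 0 → p (gamP k) = p k)
    (X : Matrix (Fin N) (Fin N) K) :
    psiMap K rt p (psiMap K rt p X) =
      Matrix.of fun k l =>
        (if k = 0 then (-1 : K) else 1) * (if l = 0 then (-1 : K) else 1) * X k l := by
  ext k l
  by_cases hk : k = 0 <;> by_cases hl : l = 0 <;>
    simp [psiMap, Matrix.of_apply, hk, hl,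
      gamP_eq_zero_iff, gamP_zero, gamP_gamP, p_gamP hsym]
  · linear_combination (gSignP K p l * gSignP K p l * X 0 l) * hrt
      - X 0 l * gSign_sq (K := K) (p := p) l
  · linear_combination
      (gSignP K p (gamP k) * gSignP K p (gamP k) * X k 0) * hrt
      - X k 0 * gSign_sq (K := K) (p := p) (gamP k)
  · rw [gSign_gamP hNeven hN hpmid hsym hk, gSign_gamP hNeven hN hpmid hsym hl]
    rcases Nat.le_one_iff_eq_zero_or_eq_one.mp (hp k) with h2 | h2 <;> rw [h2] <;>
      rcases Nat.le_one_iff_eq_zero_or_eq_one.mp (hp l) with h3 | h3 <;> rw [h3] <;>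
      linear_combination (gSignP K p l * gSignP K p l * X k l) * gSign_sq (K := K) (p := p) k
        + X k l * gSign_sq (K := K) (p := p) l
end Aux3
section Aux4

variable {K : Type*} [Field K] [CharZero K] {N : ℕ} [NeZero N]
variable {rt : K} {p : Fin N → ℕ}

lemma psi_four (hN : 4 ≤ N) (hNeven : N % 2 = 0) (hrt : rt ^ 2 = -1)
    (hp : ∀ i, p i ≤ 1) (hpmid : p ⟨N / 2, by omega⟩ = 0)
    (hsym : ∀ k : Fin N, k ≠ 0 → p (gamP k) = p k)
    (X : Matrix (Fin N) (Fin N) K) :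
    psiMap K rt p (psiMap K rt p (psiMap K rt p (psiMap K rt p X))) = X := by
  rw [psi_sq hN hNeven hrt hp hpmid hsym, psi_sq hN hNeven hrt hp hpmid hsym]
  ext k l
  simp only [Matrix.of_apply]
  split_ifs <;> ring

lemma psi_add (X Y : Matrix (Fin N) (Fin N) K) :
    psiMap K rt p (X + Y) = psiMap K rt p X + psiMap K rt p Y := by
  ext k l
  simp only [psiMap, Matrix.of_apply, Matrix.add_apply]
  split_ifs <;> ring

lemma psi_smul (c : K) (X : Matrix (Fin N) (Fin N) K) :
    psiMap K rt p (c • X) = c • psiMap K rt p X := by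
  ext k l
  simp only [psiMap, Matrix.of_apply, Matrix.smul_apply, smul_eq_mul]
  split_ifs <;> ring

lemma psi_sub (X Y : Matrix (Fin N) (Fin N) K) :
    psiMap K rt p (X - Y) = psiMap K rt p X - psiMap K rt p Y := by
  ext k l
  simp only [psiMap, Matrix.of_apply, Matrix.sub_apply]
  split_ifs <;> ring

lemma psi_homog (hsym : ∀ k : Fin N, k ≠ 0 → p (gamP k) = p k)
    (hp0 : p 0 = 1) (a : ℕ) (X : Matrix (Fin N) (Fin N) K)
    (hX : IsHomog K p a X) : IsHomog K p a (psiMap K rt p X) := by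
  intro k l hkl
  simp only [psiMap, Matrix.of_apply]
  rcases eq_or_ne k 0 with rfl | hk <;> rcases eq_or_ne l 0 with rfl | hl
  · simp only [eq_self_iff_true, if_true]
    rw [hX 0 0 (by omega), neg_zero]
  · simp only [eq_self_iff_true, if_true, if_neg hl]
    rw [hX (gamP l) 0 (by rw [p_gamP hsym, hp0]; rw [hp0] at hkl; omega)]
    ring
  · simp only [eq_self_iff_true, if_true, if_neg hk]
    rw [hX 0 (gamP k) (by rw [p_gamP hsym, hp0]; rw [hp0] at hkl; omega)]
    ring
  · simp only [if_neg hk, if_neg hl]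
    rw [hX (gamP l) (gamP k) (by rw [p_gamP hsym, p_gamP hsym]; omega)]
    ring

lemma psi_one (hN : 4 ≤ N) (hNeven : N % 2 = 0)
    (hp : ∀ i, p i ≤ 1)
    (hsym : ∀ k : Fin N, k ≠ 0 → p (gamP k) = p k) :
    psiMap K rt p (1 : Matrix (Fin N) (Fin N) K) = -1 := by
  ext k l
  simp only [psiMap, Matrix.of_apply, Matrix.neg_apply]
  by_cases hk : k = 0 <;> by_cases hl : l = 0
  · subst hk; subst hl; simp
  · subst hk
    rw [if_pos rfl, if_neg hl, Matrix.one_apply_ne (by rw [Ne, gamP_eq_zero_iff]; exact hl),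
      Matrix.one_apply_ne (Ne.symm hl)]
    ring
  · subst hl
    rw [if_neg hk, if_pos rfl, Matrix.one_apply_ne ?h1, Matrix.one_apply_ne hk]
    · ring
    · rw [Ne, eq_comm, gamP_eq_zero_iff]; exact hk
  · rw [if_neg hk, if_neg hl]
    by_cases hkl : k = l
    · subst hkl
      rw [Matrix.one_apply_eq, Matrix.one_apply_eq]
      rcases Nat.le_one_iff_eq_zero_or_eq_one.mp (hp (gamP k)) with h2 | h2 <;> rw [h2] <;>
        · norm_num
          linear_combination gSign_sq (K := K) (p := p) (gamP k)
    · rw [Matrix.one_apply_ne (fun h => hkl (by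
          have := congrArg gamP h; rwa [gamP_gamP, gamP_gamP, eq_comm] at this)),
        Matrix.one_apply_ne hkl]
      ring

lemma strP_psi (hN : 4 ≤ N) (hNeven : N % 2 = 0)
    (hp : ∀ i, p i ≤ 1) (hp0 : p 0 = 1)
    (hsym : ∀ k : Fin N, k ≠ 0 → p (gamP k) = p k)
    (X : Matrix (Fin N) (Fin N) K) :
    strP K p (psiMap K rt p X) = - strP K p X := by
  unfold strP
  rw [← Equiv.sum_comp (gamEquiv N) (fun i => (-1 : K) ^ (p i) * psiMap K rt p X i i)]
  rw [← Finset.sum_neg_distrib]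
  apply Finset.sum_congr rfl
  intro m _
  simp only [gamEquiv_apply]
  by_cases hm : m = 0
  · subst hm
    simp only [gamP_zero, psiMap, Matrix.of_apply, eq_self_iff_true, if_true, ite_true, hp0]
    ring
  · have hgm : gamP m ≠ 0 := by rw [Ne, gamP_eq_zero_iff]; exact hm
    simp only [psiMap, Matrix.of_apply, if_neg hgm, gamP_gamP, p_gamP hsym]
    rcases Nat.le_one_iff_eq_zero_or_eq_one.mp (hp m) with h2 | h2 <;> rw [h2] <;>
      · norm_num
        linear_combination (X m m) * gSign_sq (K := K) (p := p) m
end Aux4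
section Mul

variable {K : Type*} [Field K] [CharZero K] {N : ℕ} [NeZero N]
variable {rt : K} {p : Fin N → ℕ}

lemma homog_ne {a : ℕ} {X : Matrix (Fin N) (Fin N) K} (hX : IsHomog K p a X)
    {i j : Fin N} (h : X i j ≠ 0) : (p i + p j) % 2 = a % 2 := by
  by_contra hc; exact h (hX i j hc)

lemma psi_mul (hN : 4 ≤ N) (hNeven : N % 2 = 0) (hrt : rt ^ 2 = -1)
    (hp : ∀ i, p i ≤ 1) (hp0 : p 0 = 1) (hpmid : p ⟨N / 2, by omega⟩ = 0)
    (hsym : ∀ k : Fin N, k ≠ 0 → p (gamP k) = p k)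
    (a b : ℕ) (ha : a ≤ 1) (hb : b ≤ 1)
    (X Y : Matrix (Fin N) (Fin N) K) (hX : IsHomog K p a X) (hY : IsHomog K p b Y) :
    psiMap K rt p (X * Y)
      = (-(-1 : K) ^ (a * b)) • (psiMap K rt p Y * psiMap K rt p X) := by
  rcases Nat.le_one_iff_eq_zero_or_eq_one.mp ha with rfl | rfl <;>
    rcases Nat.le_one_iff_eq_zero_or_eq_one.mp hb with rfl | rfl <;>
  · ext k l
    have hR : (psiMap K rt p Y * psiMap K rt p X) k l
        = ∑ m, psiMap K rt p Y k (gamP m) * psiMap K rt p X (gamP m) l := by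
      rw [Matrix.mul_apply,
        ← Equiv.sum_comp (gamEquiv N) (fun m => psiMap K rt p Y k m * psiMap K rt p X m l)]
      simp only [gamEquiv_apply]
    rw [Matrix.smul_apply, hR, smul_eq_mul, Finset.mul_sum]
    simp only [psiMap, Matrix.of_apply, Matrix.mul_apply]
    rcases eq_or_ne k 0 with rfl | hk <;> rcases eq_or_ne l 0 with rfl | hl
    · -- branch A
      simp only [eq_self_iff_true, if_true, ite_true]
      rw [← Finset.sum_neg_distrib]
      apply Finset.sum_congr rfl
      intro m _
      rcases eq_or_ne m 0 with rfl | hm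
      · simp only [gamP_zero, eq_self_iff_true, if_true, ite_true]
        by_cases hx : X 0 0 = 0
        · rw [hx]; ring
        by_cases hy : Y 0 0 = 0
        · rw [hy]; ring
        have hparx := homog_ne hX hx
        have hpary := homog_ne hY hy
        simp only [p_gamP hsym, hp0] at hparx hpary
        first
            | (exfalso; omega)
            | ring1
            | (ring_nf; rw [hrt]; ring1)
            | (ring_nf; rw [hrt]; ring_nf)
      · have hgm : gamP m ≠ 0 := fun h => hm (by rwa [gamP_eq_zero_iff] at h)
        simp only [if_neg hgm, gamP_gamP, p_gamP hsym]
        by_cases hx : X 0 m = 0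
        · rw [hx]; ring
        by_cases hy : Y m 0 = 0
        · rw [hy]; ring
        have hparx := homog_ne hX hx
        have hpary := homog_ne hY hy
        simp only [p_gamP hsym, hp0] at hparx hpary
        rw [gSign_gamP hNeven hN hpmid hsym hm]
        rcases Nat.le_one_iff_eq_zero_or_eq_one.mp (hp m) with hq0 | hq0 <;> rw [hq0] <;>
          rcases gSign_cases (K := K) (p := p) m with hg | hg <;> rw [hg] <;>
          first
            | (exfalso; omega)
            | ring1
            | (ring_nf; rw [hrt]; ring1)
            | (ring_nf; rw [hrt]; ring_nf)
    · -- branch B : k = 0, l ≠ 0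
      simp only [eq_self_iff_true, if_true, ite_true, if_neg hl]
      rw [Finset.mul_sum, ← Finset.sum_neg_distrib]
      apply Finset.sum_congr rfl
      intro m _
      rcases eq_or_ne m 0 with rfl | hm
      · simp only [gamP_zero, eq_self_iff_true, if_true, ite_true, if_neg hl]
        by_cases hx : X (gamP l) 0 = 0
        · rw [hx]; ring
        by_cases hy : Y 0 0 = 0
        · rw [hy]; ring
        have hparx := homog_ne hX hx
        have hpary := homog_ne hY hy
        simp only [p_gamP hsym, hp0] at hparx hpary
        first
            | (exfalso; omega)
            | ring1
            | (ring_nf; rw [hrt]; ring1)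
            | (ring_nf; rw [hrt]; ring_nf)
      · have hgm : gamP m ≠ 0 := fun h => hm (by rwa [gamP_eq_zero_iff] at h)
        simp only [if_neg hgm, if_neg hl, gamP_gamP, p_gamP hsym]
        by_cases hx : X (gamP l) m = 0
        · rw [hx]; ring
        by_cases hy : Y m 0 = 0
        · rw [hy]; ring
        have hparx := homog_ne hX hx
        have hpary := homog_ne hY hy
        simp only [p_gamP hsym, hp0] at hparx hpary
        rw [gSign_gamP hNeven hN hpmid hsym hm]
        rw [gSign_gamP hNeven hN hpmid hsym hl]
        rcases Nat.le_one_iff_eq_zero_or_eq_one.mp (hp l) with hq0 | hq0 <;> rw [hq0] <;>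
          rcases Nat.le_one_iff_eq_zero_or_eq_one.mp (hp m) with hq1 | hq1 <;> rw [hq1] <;>
          rcases gSign_cases (K := K) (p := p) m with hg | hg <;> rw [hg] <;>
          first
            | (exfalso; omega)
            | ring1
            | (ring_nf; rw [hrt]; ring1)
            | (ring_nf; rw [hrt]; ring_nf)
    · -- branch C : k ≠ 0, l = 0
      simp only [eq_self_iff_true, if_true, ite_true, if_neg hk]
      rw [Finset.mul_sum, ← Finset.sum_neg_distrib]
      apply Finset.sum_congr rfl
      intro m _
      rcases eq_or_ne m 0 with rfl | hm
      · simp only [gamP_zero, eq_self_iff_true, if_true, ite_true, if_neg hk]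
        by_cases hx : X 0 0 = 0
        · rw [hx]; ring
        by_cases hy : Y 0 (gamP k) = 0
        · rw [hy]; ring
        have hparx := homog_ne hX hx
        have hpary := homog_ne hY hy
        simp only [p_gamP hsym, hp0] at hparx hpary
        first
            | (exfalso; omega)
            | ring1
            | (ring_nf; rw [hrt]; ring1)
            | (ring_nf; rw [hrt]; ring_nf)
      · have hgm : gamP m ≠ 0 := fun h => hm (by rwa [gamP_eq_zero_iff] at h)
        simp only [if_neg hgm, if_neg hk, gamP_gamP, p_gamP hsym]
        by_cases hx : X 0 m = 0
        · rw [hx]; ring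
        by_cases hy : Y m (gamP k) = 0
        · rw [hy]; ring
        have hparx := homog_ne hX hx
        have hpary := homog_ne hY hy
        simp only [p_gamP hsym, hp0] at hparx hpary
        rw [gSign_gamP hNeven hN hpmid hsym hk]
        rcases Nat.le_one_iff_eq_zero_or_eq_one.mp (hp k) with hq0 | hq0 <;> rw [hq0] <;>
          rcases Nat.le_one_iff_eq_zero_or_eq_one.mp (hp m) with hq1 | hq1 <;> rw [hq1] <;>
          rcases gSign_cases (K := K) (p := p) m with hg | hg <;> rw [hg] <;>
          first
            | (exfalso; omega)
            | ring1
            | (ring_nf; rw [hrt]; ring1)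
            | (ring_nf; rw [hrt]; ring_nf)
    · -- branch D : k ≠ 0, l ≠ 0
      simp only [if_neg hk, if_neg hl, p_gamP hsym]
      rw [Finset.mul_sum, ← Finset.sum_neg_distrib]
      apply Finset.sum_congr rfl
      intro m _
      rcases eq_or_ne m 0 with rfl | hm
      · simp only [gamP_zero, eq_self_iff_true, if_true, ite_true, if_neg hk, if_neg hl]
        by_cases hx : X (gamP l) 0 = 0
        · rw [hx]; ring
        by_cases hy : Y 0 (gamP k) = 0
        · rw [hy]; ring
        have hparx := homog_ne hX hx
        have hpary := homog_ne hY hy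
        simp only [p_gamP hsym, hp0] at hparx hpary
        rw [gSign_gamP hNeven hN hpmid hsym hl]
        rcases Nat.le_one_iff_eq_zero_or_eq_one.mp (hp k) with hq0 | hq0 <;> rw [hq0] <;>
          rcases Nat.le_one_iff_eq_zero_or_eq_one.mp (hp l) with hq1 | hq1 <;> rw [hq1] <;>
          first
            | (exfalso; omega)
            | ring1
            | (ring_nf; rw [hrt]; ring1)
            | (ring_nf; rw [hrt]; ring_nf)
      · have hgm : gamP m ≠ 0 := fun h => hm (by rwa [gamP_eq_zero_iff] at h)
        simp only [if_neg hgm, if_neg hk, if_neg hl, gamP_gamP, p_gamP hsym]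
        by_cases hx : X (gamP l) m = 0
        · rw [hx]; ring
        by_cases hy : Y m (gamP k) = 0
        · rw [hy]; ring
        have hparx := homog_ne hX hx
        have hpary := homog_ne hY hy
        simp only [p_gamP hsym, hp0] at hparx hpary
        rw [gSign_gamP hNeven hN hpmid hsym hk]
        rw [gSign_gamP hNeven hN hpmid hsym hl]
        rcases Nat.le_one_iff_eq_zero_or_eq_one.mp (hp k) with hq0 | hq0 <;> rw [hq0] <;>
          rcases Nat.le_one_iff_eq_zero_or_eq_one.mp (hp l) with hq1 | hq1 <;> rw [hq1] <;>
          rcases Nat.le_one_iff_eq_zero_or_eq_one.mp (hp m) with hq2 | hq2 <;> rw [hq2] <;>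
          rcases gSign_cases (K := K) (p := p) m with hg | hg <;> rw [hg] <;>
          first
            | (exfalso; omega)
            | ring1
            | (ring_nf; rw [hrt]; ring1)
            | (ring_nf; rw [hrt]; ring_nf)

end Mul
section Glue

variable {K : Type*} [Field K] [CharZero K] {N : ℕ} [NeZero N]
variable {rt : K} {p : Fin N → ℕ}

lemma oddPart_add (X Y : Matrix (Fin N) (Fin N) K) :
    oddPart K p (X + Y) = oddPart K p X + oddPart K p Y := by
  ext i j
  simp only [oddPart, Matrix.of_apply, Matrix.add_apply]
  split_ifs <;> ring

lemma oddPart_homog_one {a : ℕ} (ha : a % 2 = 1) {X : Matrix (Fin N) (Fin N) K}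
    (hX : IsHomog K p a X) : oddPart K p X = X := by
  ext i j
  simp only [oddPart, Matrix.of_apply]
  split_ifs with h
  · rfl
  · exact (hX i j (by omega)).symm

lemma oddPart_homog_zero {a : ℕ} (ha : a % 2 = 0) {X : Matrix (Fin N) (Fin N) K}
    (hX : IsHomog K p a X) : oddPart K p X = 0 := by
  ext i j
  simp only [oddPart, Matrix.of_apply, Matrix.zero_apply]
  split_ifs with h
  · exact hX i j (by omega)
  · rfl

lemma sbr_add_left (X X' Y : Matrix (Fin N) (Fin N) K) :
    sbr K p (X + X') Y = sbr K p X Y + sbr K p X' Y := by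
  unfold sbr
  rw [oddPart_add, add_mul, mul_add, mul_add, smul_add]
  abel

lemma sbr_add_right (X Y Y' : Matrix (Fin N) (Fin N) K) :
    sbr K p X (Y + Y') = sbr K p X Y + sbr K p X Y' := by
  unfold sbr
  rw [oddPart_add, mul_add, add_mul, add_mul, smul_add]
  abel

lemma sbr_homog {a b : ℕ} (ha : a ≤ 1) (hb : b ≤ 1)
    {X Y : Matrix (Fin N) (Fin N) K} (hX : IsHomog K p a X) (hY : IsHomog K p b Y) :
    sbr K p X Y = X * Y - ((-1 : K) ^ (a * b)) • (Y * X) := by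
  unfold sbr
  rcases Nat.le_one_iff_eq_zero_or_eq_one.mp ha with rfl | rfl
  · rw [oddPart_homog_zero rfl hX, mul_zero, smul_zero, add_zero, Nat.zero_mul,
      pow_zero, one_smul]
  · rcases Nat.le_one_iff_eq_zero_or_eq_one.mp hb with rfl | rfl
    · rw [oddPart_homog_zero rfl hY, zero_mul, smul_zero, add_zero, Nat.mul_zero,
        pow_zero, one_smul]
    · rw [oddPart_homog_one rfl hX, oddPart_homog_one rfl hY]
      have h1 : ((-1 : K) ^ (1 * 1)) = -1 := by norm_num
      rw [h1, two_smul, neg_smul, one_smul]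
      abel

lemma psi_sbr_homog (hN : 4 ≤ N) (hNeven : N % 2 = 0) (hrt : rt ^ 2 = -1)
    (hp : ∀ i, p i ≤ 1) (hp0 : p 0 = 1) (hpmid : p ⟨N / 2, by omega⟩ = 0)
    (hsym : ∀ k : Fin N, k ≠ 0 → p (gamP k) = p k)
    {a b : ℕ} (ha : a ≤ 1) (hb : b ≤ 1)
    {X Y : Matrix (Fin N) (Fin N) K} (hX : IsHomog K p a X) (hY : IsHomog K p b Y) :
    psiMap K rt p (sbr K p X Y) = sbr K p (psiMap K rt p X) (psiMap K rt p Y) := by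
  rw [sbr_homog ha hb hX hY,
    sbr_homog ha hb (psi_homog hsym hp0 a X hX) (psi_homog hsym hp0 b Y hY),
    psi_sub, psi_smul, psi_mul hN hNeven hrt hp hp0 hpmid hsym a b ha hb X Y hX hY,
    psi_mul hN hNeven hrt hp hp0 hpmid hsym b a hb ha Y X hY hX]
  rcases Nat.le_one_iff_eq_zero_or_eq_one.mp ha with rfl | rfl <;>
    rcases Nat.le_one_iff_eq_zero_or_eq_one.mp hb with rfl | rfl <;>
    · norm_num
      try abel

lemma homog_decomp (X : Matrix (Fin N) (Fin N) K) :
    ∃ Xe Xo : Matrix (Fin N) (Fin N) K,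
      X = Xe + Xo ∧ IsHomog K p 0 Xe ∧ IsHomog K p 1 Xo := by
  refine ⟨Matrix.of fun i j => if (p i + p j) % 2 = 1 then 0 else X i j,
    oddPart K p X, ?_, ?_, ?_⟩
  · ext i j
    simp only [Matrix.add_apply, Matrix.of_apply, oddPart]
    split_ifs <;> ring
  · intro i j h
    simp only [Matrix.of_apply]
    rw [if_pos (by omega)]
  · intro i j h
    simp only [oddPart, Matrix.of_apply]
    rw [if_neg (by omega)]

lemma psi_sbr (hN : 4 ≤ N) (hNeven : N % 2 = 0) (hrt : rt ^ 2 = -1)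
    (hp : ∀ i, p i ≤ 1) (hp0 : p 0 = 1) (hpmid : p ⟨N / 2, by omega⟩ = 0)
    (hsym : ∀ k : Fin N, k ≠ 0 → p (gamP k) = p k)
    (X Y : Matrix (Fin N) (Fin N) K) :
    psiMap K rt p (sbr K p X Y) = sbr K p (psiMap K rt p X) (psiMap K rt p Y) := by
  obtain ⟨Xe, Xo, hXs, hXe, hXo⟩ := homog_decomp (K := K) (p := p) X
  obtain ⟨Ye, Yo, hYs, hYe, hYo⟩ := homog_decomp (K := K) (p := p) Y
  rw [hXs, hYs, sbr_add_left, sbr_add_right, sbr_add_right, psi_add, psi_add, psi_add,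
    psi_sbr_homog hN hNeven hrt hp hp0 hpmid hsym zero_le_one zero_le_one hXe hYe,
    psi_sbr_homog hN hNeven hrt hp hp0 hpmid hsym zero_le_one le_rfl hXe hYo,
    psi_sbr_homog hN hNeven hrt hp hp0 hpmid hsym le_rfl zero_le_one hXo hYe,
    psi_sbr_homog hN hNeven hrt hp hp0 hpmid hsym le_rfl le_rfl hXo hYo,
    psi_add, psi_add, sbr_add_left, sbr_add_right, sbr_add_right]

end Glue
/-- properties of the order-four automorphism `ψ` of `gl_p`. -/
theorem stmt5 (K : Type*) [Field K] [CharZero K] {N : ℕ} [NeZero N]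
    (hN : 4 ≤ N) (hNeven : N % 2 = 0)
    (rt : K) (hrt : rt ^ 2 = -1)
    (p : Fin N → ℕ) (hp : ∀ i, p i ≤ 1)
    (hp0 : p 0 = 1) (hpmid : p ⟨N / 2, by omega⟩ = 0)
    (hsym : ∀ k : Fin N, k ≠ 0 → p (gamP k) = p k) :
    (∀ X : Matrix (Fin N) (Fin N) K,
      psiMap K rt p (psiMap K rt p (psiMap K rt p (psiMap K rt p X))) = X) ∧
    (¬ ∀ X : Matrix (Fin N) (Fin N) K, psiMap K rt p (psiMap K rt p X) = X) ∧
    (∀ (a : ℕ) (X : Matrix (Fin N) (Fin N) K),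
      IsHomog K p a X → IsHomog K p a (psiMap K rt p X)) ∧
    (∀ X Y : Matrix (Fin N) (Fin N) K,
      psiMap K rt p (sbr K p X Y) = sbr K p (psiMap K rt p X) (psiMap K rt p Y)) ∧
    (∀ X : Matrix (Fin N) (Fin N) K, strP K p (psiMap K rt p X) = -strP K p X) ∧
    (psiMap K rt p '' {X | strP K p X = 0} = {X | strP K p X = 0}) ∧
    (psiMap K rt p (1 : Matrix (Fin N) (Fin N) K) = -1) := by
  refine ⟨psi_four hN hNeven hrt hp hpmid hsym, ?_,
    fun a X hX => psi_homog hsym hp0 a X hX,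
    psi_sbr hN hNeven hrt hp hp0 hpmid hsym,
    strP_psi hN hNeven hp hp0 hsym, ?_,
    psi_one hN hNeven hp hsym⟩
  · intro h
    have h2 := h (Matrix.of fun _ _ => (1 : K))
    rw [psi_sq hN hNeven hrt hp hpmid hsym] at h2
    have h3 := congr_fun (congr_fun h2 0) ⟨1, by omega⟩
    have hne : (⟨1, by omega⟩ : Fin N) ≠ 0 := by simp [Fin.ext_iff]
    simp only [Matrix.of_apply, if_neg hne, eq_self_iff_true, if_true, ite_true,
      mul_one] at h3
    norm_num at h3
  · ext Z
    simp only [Set.mem_image, Set.mem_setOf_eq]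
    constructor
    · rintro ⟨W, hW, rfl⟩
      rw [strP_psi hN hNeven hp hp0 hsym, hW, neg_zero]
    · intro hZ
      exact ⟨psiMap K rt p (psiMap K rt p (psiMap K rt p Z)),
        by rw [strP_psi hN hNeven hp hp0 hsym, strP_psi hN hNeven hp hp0 hsym,
          strP_psi hN hNeven hp hp0 hsym, hZ]; norm_num,
        psi_four hN hNeven hrt hp hpmid hsym Z⟩
end

section
/- The algebra Ũ_χ admits a Hopf K-algebra structure (Δ, ε, S) such that for all a ∈ Λ and i ∈ I: Δ(K_a) = K_a ⊗ K_a, Δ(L_a) = L_a ⊗ L_a, Δ(E_i) = E_i ⊗ 1 + K_{α_i} ⊗ E_i, Δ(F_i) = F_i ⊗ L_{α_i} + 1 ⊗ F_i, S(K_a) = K_{−a}, S(L_a) = L_{−a}, S(E_i) = −K_{−α_i} E_i, S(F_i) = −F_i L_{−α_i}, ε(K_a) = ε(L_a) = 1, ε(E_i) = ε(F_i) = 0. -/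
open scoped TensorProduct

/-- Generators of the algebra `Ũ_χ`. -/
inductive QGen (Λ I : Type) : Type
  | Kg : Λ → QGen Λ I
  | Lg : Λ → QGen Λ I
  | Eg : I → QGen Λ I
  | Fg : I → QGen Λ I

/-- The free algebra on the generators. -/
abbrev FA (K : Type) [Field K] (Λ I : Type) := FreeAlgebra K (QGen Λ I)

section Defs

variable {K : Type} [Field K] {Λ I : Type} [AddCommGroup Λ]

def gK (a : Λ) : FA K Λ I := FreeAlgebra.ι K (QGen.Kg a)
def gL (a : Λ) : FA K Λ I := FreeAlgebra.ι K (QGen.Lg a)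
def gE (i : I) : FA K Λ I := FreeAlgebra.ι K (QGen.Eg i)
def gF (i : I) : FA K Λ I := FreeAlgebra.ι K (QGen.Fg i)

variable (χ : Λ → Λ → Kˣ) (α : I → Λ)

/-- The defining relations of `Ũ_χ`. -/
inductive URel : FA K Λ I → FA K Λ I → Prop
  | K0 : URel (gK (0 : Λ)) 1
  | L0 : URel (gL (0 : Λ)) 1
  | KK (a b : Λ) : URel (gK a * gK b) (gK (a + b))
  | LL (a b : Λ) : URel (gL a * gL b) (gL (a + b))
  | KL (a b : Λ) : URel (gK a * gL b) (gL b * gK a)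
  | KE (a : Λ) (i : I) : URel (gK a * gE i) ((χ a (α i) : K) • (gE i * gK a))
  | KF (a : Λ) (i : I) : URel (gK a * gF i) ((((χ a (α i))⁻¹ : Kˣ) : K) • (gF i * gK a))
  | LE (a : Λ) (i : I) : URel (gL a * gE i) ((((χ (α i) a)⁻¹ : Kˣ) : K) • (gE i * gL a))
  | LF (a : Λ) (i : I) : URel (gL a * gF i) ((χ (α i) a : K) • (gF i * gL a))
  | EFsame (i : I) : URel (gE i * gF i - gF i * gE i) (-gK (α i) + gL (α i))
  | EFne (i j : I) (h : i ≠ j) : URel (gE i * gF j - gF j * gE i) 0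

/-- The algebra `Ũ_χ`. -/
abbrev Util := RingQuot (URel χ α)

def uK (a : Λ) : Util χ α := RingQuot.mkAlgHom K (URel χ α) (gK a)
def uL (a : Λ) : Util χ α := RingQuot.mkAlgHom K (URel χ α) (gL a)
def uE (i : I) : Util χ α := RingQuot.mkAlgHom K (URel χ α) (gE i)
def uF (i : I) : Util χ α := RingQuot.mkAlgHom K (URel χ α) (gF i)

end Defs

/-!
`Δ`, `ε` and `S` are defined on the free algebra by their values on the generators and descend to
`Ũ_χ` because they respect the defining relations; for `S`, an algebra map into the opposite
algebra, this uses `χ (-a) b = (χ a b)⁻¹ = χ a (-b)`. Coassociativity and the counit laws compare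
algebra homomorphisms, so they only need to be checked on generators. The antipode laws are not
multiplicative, but since `Δ` is multiplicative and `S` reverses products, the elements satisfying
them are closed under products; they contain the scalars and the generators, hence everything.
-/

section AdditiveToMultiplicative

variable {Λ G : Type*} [AddGroup Λ] [Group G] {f : Λ → G}

theorem map_zero_of_map_add_eq_mul (hf : ∀ a b, f (a + b) = f a * f b) : f 0 = 1 := by
  simpa using hf 0 0

theorem map_neg_of_map_add_eq_mul (hf : ∀ a b, f (a + b) = f a * f b) (a : Λ) :
    f (-a) = (f a)⁻¹ :=
  eq_inv_of_mul_eq_one_right (by rw [← hf, add_neg_cancel, map_zero_of_map_add_eq_mul hf])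

end AdditiveToMultiplicative

theorem Units.eq_inv_smul_of_eq_smul {R M : Type*} [Monoid R] [AddMonoid M] [DistribMulAction R M]
    {c : Rˣ} {x y : M} (h : x = (c : R) • y) : y = ((c⁻¹ : Rˣ) : R) • x := by
  rw [h, smul_smul, Units.inv_mul, one_smul]

section AntipodeOfAntimultiplicative

variable {R A : Type*} [CommSemiring R] [Semiring A] [Algebra R A]
  {Δ : A →ₐ[R] A ⊗[R] A} {ε : A →ₐ[R] R} {S : A →ₗ[R] A}

theorem mul'_rTensor_comul_mul (hS : ∀ x y, S (x * y) = S y * S x) {x y : A}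
    (hx : LinearMap.mul' R A (S.rTensor A (Δ x)) = algebraMap R A (ε x))
    (hy : LinearMap.mul' R A (S.rTensor A (Δ y)) = algebraMap R A (ε y)) :
    LinearMap.mul' R A (S.rTensor A (Δ (x * y))) = algebraMap R A (ε (x * y)) := by
  have hmul (u : A ⊗[R] A) (c d : A) :
      LinearMap.mul' R A (S.rTensor A (u * c ⊗ₜ d)) =
        S c * LinearMap.mul' R A (S.rTensor A u) * d := by
    induction u using TensorProduct.induction_on with
    | zero => simp
    | tmul a b => simp [hS, mul_assoc]
    | add u v hu hv => simp only [add_mul, map_add, hu, hv, mul_add]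
  have hΔx (v : A ⊗[R] A) :
      LinearMap.mul' R A (S.rTensor A (Δ x * v)) = ε x • LinearMap.mul' R A (S.rTensor A v) := by
    induction v using TensorProduct.induction_on with
    | zero => simp
    | tmul c d => simp [hmul, hx, Algebra.commutes, Algebra.smul_def, mul_assoc]
    | add u v hu hv => simp only [mul_add, map_add, hu, hv, smul_add]
  rw [map_mul, hΔx, hy, map_mul, Algebra.smul_def, map_mul]

theorem mul'_lTensor_comul_mul (hS : ∀ x y, S (x * y) = S y * S x) {x y : A}
    (hx : LinearMap.mul' R A (S.lTensor A (Δ x)) = algebraMap R A (ε x))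
    (hy : LinearMap.mul' R A (S.lTensor A (Δ y)) = algebraMap R A (ε y)) :
    LinearMap.mul' R A (S.lTensor A (Δ (x * y))) = algebraMap R A (ε (x * y)) := by
  have hmul (u : A ⊗[R] A) (c d : A) :
      LinearMap.mul' R A (S.lTensor A (c ⊗ₜ d * u)) =
        c * LinearMap.mul' R A (S.lTensor A u) * S d := by
    induction u using TensorProduct.induction_on with
    | zero => simp
    | tmul a b => simp [hS, mul_assoc]
    | add u v hu hv => simp only [mul_add, map_add, hu, hv, add_mul]
  have hΔy (u : A ⊗[R] A) :
      LinearMap.mul' R A (S.lTensor A (u * Δ y)) = ε y • LinearMap.mul' R A (S.lTensor A u) := by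
    induction u using TensorProduct.induction_on with
    | zero => simp
    | tmul c d => simp [hmul, hy, Algebra.commutes, Algebra.smul_def, mul_assoc]
    | add u v hu hv => simp only [add_mul, map_add, hu, hv, smul_add]
  rw [map_mul, hΔy, hx, Algebra.smul_def, map_mul ε, mul_comm (ε x), map_mul]

end AntipodeOfAntimultiplicative

namespace Util

variable {K : Type} [Field K] {Λ I : Type} [AddCommGroup Λ] {χ : Λ → Λ → Kˣ} {α : I → Λ}

/- `RingQuot.instRing` is built on `FreeAlgebra.instRing`, whose semiring structure is not
reducibly `FreeAlgebra.instSemiring`; without this merged instance, lemmas mixing `*` and `-`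
(such as `neg_mul`) do not rewrite in `Util χ α`. -/
abbrev instRing : Ring (Util χ α) := { RingQuot.instSemiring _, RingQuot.instRing _ with }

attribute [local instance] instRing

section UniversalProperty

variable {A : Type*} [Semiring A] [Algebra K A]

variable (χ α) in
def RespectsRel (f : QGen Λ I → A) : Prop :=
  ∀ ⦃x y : FA K Λ I⦄, URel χ α x y → FreeAlgebra.lift K f x = FreeAlgebra.lift K f y

variable (χ α) in
noncomputable def lift (f : QGen Λ I → A) (hf : RespectsRel χ α f) : Util χ α →ₐ[K] A :=
  RingQuot.liftAlgHom K ⟨FreeAlgebra.lift K f, fun _ _ h => hf h⟩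

variable {f : QGen Λ I → A} (hf : RespectsRel χ α f)
include hf

@[simp] theorem lift_uK (a : Λ) : lift χ α f hf (uK χ α a) = f (.Kg a) := by
  rw [lift, uK, gK, RingQuot.liftAlgHom_mkAlgHom_apply, FreeAlgebra.lift_ι_apply]

@[simp] theorem lift_uL (a : Λ) : lift χ α f hf (uL χ α a) = f (.Lg a) := by
  rw [lift, uL, gL, RingQuot.liftAlgHom_mkAlgHom_apply, FreeAlgebra.lift_ι_apply]

@[simp] theorem lift_uE (i : I) : lift χ α f hf (uE χ α i) = f (.Eg i) := by
  rw [lift, uE, gE, RingQuot.liftAlgHom_mkAlgHom_apply, FreeAlgebra.lift_ι_apply]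

@[simp] theorem lift_uF (i : I) : lift χ α f hf (uF χ α i) = f (.Fg i) := by
  rw [lift, uF, gF, RingQuot.liftAlgHom_mkAlgHom_apply, FreeAlgebra.lift_ι_apply]

omit hf

theorem algHom_ext {φ ψ : Util χ α →ₐ[K] A}
    (hK : ∀ a, φ (uK χ α a) = ψ (uK χ α a)) (hL : ∀ a, φ (uL χ α a) = ψ (uL χ α a))
    (hE : ∀ i, φ (uE χ α i) = ψ (uE χ α i)) (hF : ∀ i, φ (uF χ α i) = ψ (uF χ α i)) :
    φ = ψ := by
  refine RingQuot.ringQuot_ext' _ _ _ (FreeAlgebra.hom_ext (funext fun g => ?_))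
  cases g
  exacts [hK _, hL _, hE _, hF _]

@[elab_as_elim]
theorem induction_on {P : Util χ α → Prop} (x : Util χ α)
    (algebraMap : ∀ r : K, P (algebraMap K _ r)) (genK : ∀ a, P (uK χ α a))
    (genL : ∀ a, P (uL χ α a)) (genE : ∀ i, P (uE χ α i)) (genF : ∀ i, P (uF χ α i))
    (add : ∀ x y, P x → P y → P (x + y)) (mul : ∀ x y, P x → P y → P (x * y)) : P x := by
  obtain ⟨p, rfl⟩ := RingQuot.mkAlgHom_surjective K (URel χ α) x
  induction p using FreeAlgebra.induction with
  | grade0 r => simpa only [AlgHom.commutes] using algebraMap r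
  | grade1 g => cases g; exacts [genK _, genL _, genE _, genF _]
  | mul p q hp hq => simpa only [map_mul] using mul _ _ hp hq
  | add p q hp hq => simpa only [map_add] using add _ _ hp hq

end UniversalProperty

section Relations

theorem uK_zero : uK χ α 0 = 1 := by
  simpa [uK] using RingQuot.mkAlgHom_rel K (URel.K0 (χ := χ) (α := α))

theorem uL_zero : uL χ α 0 = 1 := by
  simpa [uL] using RingQuot.mkAlgHom_rel K (URel.L0 (χ := χ) (α := α))

theorem uK_mul_uK (a b : Λ) : uK χ α a * uK χ α b = uK χ α (a + b) := by
  simpa [uK] using RingQuot.mkAlgHom_rel K (URel.KK (χ := χ) (α := α) a b)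

theorem uL_mul_uL (a b : Λ) : uL χ α a * uL χ α b = uL χ α (a + b) := by
  simpa [uL] using RingQuot.mkAlgHom_rel K (URel.LL (χ := χ) (α := α) a b)

theorem uL_mul_uK (a b : Λ) : uL χ α b * uK χ α a = uK χ α a * uL χ α b := by
  simpa [uK, uL] using (RingQuot.mkAlgHom_rel K (URel.KL (χ := χ) (α := α) a b)).symm

theorem uK_mul_uK_mul (a b : Λ) (x : Util χ α) :
    uK χ α a * (uK χ α b * x) = uK χ α (a + b) * x := by
  rw [← mul_assoc, uK_mul_uK]

theorem uL_mul_uL_mul (a b : Λ) (x : Util χ α) :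
    uL χ α a * (uL χ α b * x) = uL χ α (a + b) * x := by
  rw [← mul_assoc, uL_mul_uL]

theorem uL_mul_uK_mul (a b : Λ) (x : Util χ α) :
    uL χ α b * (uK χ α a * x) = uK χ α a * (uL χ α b * x) := by
  rw [← mul_assoc, uL_mul_uK, mul_assoc]

theorem uE_mul_uK (a : Λ) (i : I) :
    uE χ α i * uK χ α a = (((χ a (α i))⁻¹ : Kˣ) : K) • (uK χ α a * uE χ α i) :=
  Units.eq_inv_smul_of_eq_smul <| by
    simpa [uK, uE] using RingQuot.mkAlgHom_rel K (URel.KE (χ := χ) (α := α) a i)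

theorem uF_mul_uK (a : Λ) (i : I) :
    uF χ α i * uK χ α a = (χ a (α i) : K) • (uK χ α a * uF χ α i) := by
  have h : uK χ α a * uF χ α i = (((χ a (α i))⁻¹ : Kˣ) : K) • (uF χ α i * uK χ α a) := by
    simpa [uK, uF] using RingQuot.mkAlgHom_rel K (URel.KF (χ := χ) (α := α) a i)
  simpa using Units.eq_inv_smul_of_eq_smul h

theorem uE_mul_uL (a : Λ) (i : I) :
    uE χ α i * uL χ α a = (χ (α i) a : K) • (uL χ α a * uE χ α i) := by
  have h : uL χ α a * uE χ α i = (((χ (α i) a)⁻¹ : Kˣ) : K) • (uE χ α i * uL χ α a) := by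
    simpa [uL, uE] using RingQuot.mkAlgHom_rel K (URel.LE (χ := χ) (α := α) a i)
  simpa using Units.eq_inv_smul_of_eq_smul h

theorem uF_mul_uL (a : Λ) (i : I) :
    uF χ α i * uL χ α a = (((χ (α i) a)⁻¹ : Kˣ) : K) • (uL χ α a * uF χ α i) :=
  Units.eq_inv_smul_of_eq_smul <| by
    simpa [uL, uF] using RingQuot.mkAlgHom_rel K (URel.LF (χ := χ) (α := α) a i)

theorem uF_mul_uE_self (i : I) :
    uF χ α i * uE χ α i = uE χ α i * uF χ α i + uK χ α (α i) - uL χ α (α i) := by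
  have h : uE χ α i * uF χ α i - uF χ α i * uE χ α i = -uK χ α (α i) + uL χ α (α i) := by
    simpa [uK, uL, uE, uF] using RingQuot.mkAlgHom_rel K (URel.EFsame (χ := χ) (α := α) i)
  rw [sub_eq_iff_eq_add] at h
  rw [h]
  abel

theorem uE_mul_uF_of_ne {i j : I} (h : i ≠ j) :
    uE χ α i * uF χ α j = uF χ α j * uE χ α i := by
  simpa [uE, uF, sub_eq_zero] using RingQuot.mkAlgHom_rel K (URel.EFne (χ := χ) (α := α) i j h)

end Relations

section Counit

def counitGen : QGen Λ I → K
  | .Kg _ => 1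
  | .Lg _ => 1
  | .Eg _ => 0
  | .Fg _ => 0

theorem respectsRel_counitGen : RespectsRel χ α (counitGen : QGen Λ I → K) := by
  intro x y h
  induction h <;> simp [gK, gL, gE, gF, counitGen]

variable (χ α) in
noncomputable def counit : Util χ α →ₐ[K] K := lift χ α counitGen respectsRel_counitGen

@[simp] theorem counit_uK (a : Λ) : counit χ α (uK χ α a) = 1 := lift_uK _ a
@[simp] theorem counit_uL (a : Λ) : counit χ α (uL χ α a) = 1 := lift_uL _ a
@[simp] theorem counit_uE (i : I) : counit χ α (uE χ α i) = 0 := lift_uE _ i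
@[simp] theorem counit_uF (i : I) : counit χ α (uF χ α i) = 0 := lift_uF _ i

end Counit

section Comul

open TensorProduct

variable (χ α) in
noncomputable def comulGen : QGen Λ I → Util χ α ⊗[K] Util χ α
  | .Kg a => uK χ α a ⊗ₜ uK χ α a
  | .Lg a => uL χ α a ⊗ₜ uL χ α a
  | .Eg i => uE χ α i ⊗ₜ 1 + uK χ α (α i) ⊗ₜ uE χ α i
  | .Fg i => uF χ α i ⊗ₜ uL χ α (α i) + 1 ⊗ₜ uF χ α i

open Algebra.TensorProduct in
theorem respectsRel_comulGen : RespectsRel χ α (comulGen χ α) := by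
  intro x y h
  induction h with
  | K0 => simp [gK, comulGen, uK_zero, one_def]
  | L0 => simp [gL, comulGen, uL_zero, one_def]
  | KK a b => simp [gK, comulGen, uK_mul_uK]
  | LL a b => simp [gL, comulGen, uL_mul_uL]
  | KL a b => simp [gK, gL, comulGen, uL_mul_uK]
  | KE a i | KF a i | LE a i | LF a i =>
    simp [gK, gL, gE, gF, comulGen, mul_add, add_mul, uE_mul_uK, uF_mul_uK, uE_mul_uL, uF_mul_uL,
      uK_mul_uK, uL_mul_uL, uL_mul_uK, smul_tmul', tmul_smul, add_comm]
  | EFsame i =>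
    simp [gK, gL, gE, gF, comulGen, mul_add, add_mul, uF_mul_uE_self, uF_mul_uK, uE_mul_uL,
      smul_tmul', tmul_smul, sub_tmul, tmul_sub, add_tmul, tmul_add]
    abel
  | EFne i j hij =>
    simp [gE, gF, comulGen, mul_add, add_mul, uE_mul_uF_of_ne hij, uF_mul_uK, uE_mul_uL,
      smul_tmul', tmul_smul]
    abel

variable (χ α) in
noncomputable def comul : Util χ α →ₐ[K] Util χ α ⊗[K] Util χ α :=
  lift χ α (comulGen χ α) respectsRel_comulGen

@[simp] theorem comul_uK (a : Λ) : comul χ α (uK χ α a) = uK χ α a ⊗ₜ uK χ α a :=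
  lift_uK _ a
@[simp] theorem comul_uL (a : Λ) : comul χ α (uL χ α a) = uL χ α a ⊗ₜ uL χ α a :=
  lift_uL _ a
@[simp] theorem comul_uE (i : I) :
    comul χ α (uE χ α i) = uE χ α i ⊗ₜ 1 + uK χ α (α i) ⊗ₜ uE χ α i :=
  lift_uE _ i
@[simp] theorem comul_uF (i : I) :
    comul χ α (uF χ α i) = uF χ α i ⊗ₜ uL χ α (α i) + 1 ⊗ₜ uF χ α i :=
  lift_uF _ i

theorem comul_coassoc :
    (Algebra.TensorProduct.assoc K K K (Util χ α) (Util χ α) (Util χ α)).toAlgHom.comp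
      ((Algebra.TensorProduct.map (comul χ α) (.id K _)).comp (comul χ α)) =
      (Algebra.TensorProduct.map (.id K _) (comul χ α)).comp (comul χ α) := by
  apply algHom_ext <;> intro <;>
    simp [Algebra.TensorProduct.one_def, add_tmul, tmul_add, add_assoc]

theorem lid_comp_map_counit_comp_comul :
    (Algebra.TensorProduct.lid K (Util χ α)).toAlgHom.comp
      ((Algebra.TensorProduct.map (counit χ α) (.id K _)).comp (comul χ α)) = .id K _ := by
  apply algHom_ext <;> intro <;> simp

theorem rid_comp_map_counit_comp_comul :
    (Algebra.TensorProduct.rid K K (Util χ α)).toAlgHom.comp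
      ((Algebra.TensorProduct.map (.id K _) (counit χ α)).comp (comul χ α)) = .id K _ := by
  apply algHom_ext <;> intro <;> simp

end Comul

section Antipode

variable (χ α) in
noncomputable def antipodeGen : QGen Λ I → (Util χ α)ᵐᵒᵖ
  | .Kg a => .op (uK χ α (-a))
  | .Lg a => .op (uL χ α (-a))
  | .Eg i => .op (-(uK χ α (-α i) * uE χ α i))
  | .Fg i => .op (-(uF χ α i * uL χ α (-α i)))

variable (hχ₁ : ∀ a b c : Λ, χ (a + b) c = χ a c * χ b c)
  (hχ₂ : ∀ a b c : Λ, χ a (b + c) = χ a b * χ a c)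
include hχ₁ hχ₂

theorem respectsRel_antipodeGen : RespectsRel χ α (antipodeGen χ α) := by
  have neg_left (a c : Λ) : χ (-a) c = (χ a c)⁻¹ :=
    map_neg_of_map_add_eq_mul (f := (χ · c)) (hχ₁ · · c) a
  have neg_right (a c : Λ) : χ a (-c) = (χ a c)⁻¹ := map_neg_of_map_add_eq_mul (hχ₂ a) c
  intro x y h
  apply MulOpposite.unop_injective
  induction h <;>
    simp [gK, gL, gE, gF, antipodeGen, uK_zero, uL_zero, mul_assoc, uK_mul_uK, uL_mul_uL, uL_mul_uK,
      uE_mul_uK, uF_mul_uK, uE_mul_uL, uF_mul_uL, uK_mul_uK_mul, uL_mul_uL_mul, uL_mul_uK_mul,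
      uF_mul_uE_self, uE_mul_uF_of_ne, mul_sub, mul_add, smul_smul, add_comm, mul_comm, *]
  case EFsame => abel

variable (χ α) in
noncomputable def antipodeOp : Util χ α →ₐ[K] (Util χ α)ᵐᵒᵖ :=
  lift χ α (antipodeGen χ α) (respectsRel_antipodeGen hχ₁ hχ₂)

variable (χ α) in
noncomputable def antipode : Util χ α →ₗ[K] Util χ α :=
  (MulOpposite.opLinearEquiv K).symm.toLinearMap ∘ₗ (antipodeOp χ α hχ₁ hχ₂).toLinearMap

theorem antipode_mul (x y : Util χ α) :
    antipode χ α hχ₁ hχ₂ (x * y) = antipode χ α hχ₁ hχ₂ y * antipode χ α hχ₁ hχ₂ x := by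
  simp [antipode]

@[simp] theorem antipode_one : antipode χ α hχ₁ hχ₂ 1 = 1 := by
  simp [antipode]

@[simp] theorem antipode_algebraMap (r : K) :
    antipode χ α hχ₁ hχ₂ (algebraMap K _ r) = algebraMap K _ r := by
  simp [antipode]

@[simp] theorem antipode_uK (a : Λ) : antipode χ α hχ₁ hχ₂ (uK χ α a) = uK χ α (-a) := by
  simp [antipode, antipodeOp, antipodeGen]

@[simp] theorem antipode_uL (a : Λ) : antipode χ α hχ₁ hχ₂ (uL χ α a) = uL χ α (-a) := by
  simp [antipode, antipodeOp, antipodeGen]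

@[simp] theorem antipode_uE (i : I) :
    antipode χ α hχ₁ hχ₂ (uE χ α i) = -(uK χ α (-α i) * uE χ α i) := by
  simp [antipode, antipodeOp, antipodeGen]

@[simp] theorem antipode_uF (i : I) :
    antipode χ α hχ₁ hχ₂ (uF χ α i) = -(uF χ α i * uL χ α (-α i)) := by
  simp [antipode, antipodeOp, antipodeGen]

theorem mul'_rTensor_antipode_comul (x : Util χ α) :
    LinearMap.mul' K _ ((antipode χ α hχ₁ hχ₂).rTensor _ (comul χ α x)) =
      algebraMap K _ (counit χ α x) := by
  induction x using induction_on with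
  | algebraMap r => simp [Algebra.TensorProduct.algebraMap_apply]
  | genK a => simp [uK_mul_uK, uK_zero]
  | genL a => simp [uL_mul_uL, uL_zero]
  | genE i => simp
  | genF i => simp [mul_assoc, uL_mul_uL, uL_zero]
  | add x y hx hy => simp [hx, hy]
  | mul x y hx hy => exact mul'_rTensor_comul_mul (antipode_mul hχ₁ hχ₂) hx hy

theorem mul'_lTensor_antipode_comul (x : Util χ α) :
    LinearMap.mul' K _ ((antipode χ α hχ₁ hχ₂).lTensor _ (comul χ α x)) =
      algebraMap K _ (counit χ α x) := by
  induction x using induction_on with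
  | algebraMap r => simp [Algebra.TensorProduct.algebraMap_apply]
  | genK a => simp [uK_mul_uK, uK_zero]
  | genL a => simp [uL_mul_uL, uL_zero]
  | genE i => simp [← mul_assoc, uK_mul_uK, uK_zero]
  | genF i => simp
  | add x y hx hy => simp [hx, hy]
  | mul x y hx hy => exact mul'_lTensor_comul_mul (antipode_mul hχ₁ hχ₂) hx hy

end Antipode

end Util

theorem stmt8_general {K : Type} [Field K] {Λ I : Type} [AddCommGroup Λ]
    (χ : Λ → Λ → Kˣ) (α : I → Λ)
    (hχ1 : ∀ a b c : Λ, χ (a + b) c = χ a c * χ b c)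
    (hχ2 : ∀ a b c : Λ, χ a (b + c) = χ a b * χ a c) :
    ∃ (Δ : Util χ α →ₐ[K] (Util χ α ⊗[K] Util χ α))
      (ε : Util χ α →ₐ[K] K) (S : Util χ α →ₗ[K] Util χ α),
      -- values on generators
      (∀ a : Λ, Δ (uK χ α a) = uK χ α a ⊗ₜ[K] uK χ α a) ∧
      (∀ a : Λ, Δ (uL χ α a) = uL χ α a ⊗ₜ[K] uL χ α a) ∧
      (∀ i : I, Δ (uE χ α i) = uE χ α i ⊗ₜ[K] 1 + uK χ α (α i) ⊗ₜ[K] uE χ α i) ∧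
      (∀ i : I, Δ (uF χ α i) = uF χ α i ⊗ₜ[K] uL χ α (α i) + 1 ⊗ₜ[K] uF χ α i) ∧
      (∀ a : Λ, S (uK χ α a) = uK χ α (-a)) ∧
      (∀ a : Λ, S (uL χ α a) = uL χ α (-a)) ∧
      (∀ i : I, S (uE χ α i) = -(uK χ α (-(α i)) * uE χ α i)) ∧
      (∀ i : I, S (uF χ α i) = -(uF χ α i * uL χ α (-(α i)))) ∧
      (∀ a : Λ, ε (uK χ α a) = 1) ∧ (∀ a : Λ, ε (uL χ α a) = 1) ∧
      (∀ i : I, ε (uE χ α i) = 0) ∧ (∀ i : I, ε (uF χ α i) = 0) ∧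
      -- coassociativity
      (∀ x : Util χ α,
        (TensorProduct.assoc K (Util χ α) (Util χ α) (Util χ α))
            ((TensorProduct.map Δ.toLinearMap LinearMap.id) (Δ x))
          = (TensorProduct.map LinearMap.id Δ.toLinearMap) (Δ x)) ∧
      -- counit axioms
      (∀ x : Util χ α,
        (TensorProduct.lid K (Util χ α))
            ((TensorProduct.map ε.toLinearMap LinearMap.id) (Δ x)) = x) ∧
      (∀ x : Util χ α,
        (TensorProduct.rid K (Util χ α))
            ((TensorProduct.map LinearMap.id ε.toLinearMap) (Δ x)) = x) ∧
      -- antipode axioms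
      (∀ x : Util χ α,
        (LinearMap.mul' K (Util χ α)) ((TensorProduct.map S LinearMap.id) (Δ x))
          = algebraMap K (Util χ α) (ε x)) ∧
      (∀ x : Util χ α,
        (LinearMap.mul' K (Util χ α)) ((TensorProduct.map LinearMap.id S) (Δ x))
          = algebraMap K (Util χ α) (ε x)) := by
  refine ⟨Util.comul χ α, Util.counit χ α, Util.antipode χ α hχ1 hχ2,
    Util.comul_uK, Util.comul_uL, Util.comul_uE, Util.comul_uF,
    Util.antipode_uK hχ1 hχ2, Util.antipode_uL hχ1 hχ2,
    Util.antipode_uE hχ1 hχ2, Util.antipode_uF hχ1 hχ2,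
    Util.counit_uK, Util.counit_uL, Util.counit_uE, Util.counit_uF,
    DFunLike.congr_fun Util.comul_coassoc,
    DFunLike.congr_fun Util.lid_comp_map_counit_comp_comul,
    DFunLike.congr_fun Util.rid_comp_map_counit_comp_comul,
    Util.mul'_rTensor_antipode_comul hχ1 hχ2, Util.mul'_lTensor_antipode_comul hχ1 hχ2⟩

/-- `Ũ_χ` has a Hopf algebra structure `(Δ, ε, S)` with the
prescribed values on the generators. -/
theorem stmt8 {K : Type} [Field K] {Λ I : Type} [AddCommGroup Λ]
    [Module.Free ℤ Λ] [Module.Finite ℤ Λ] [Fintype I]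
    (χ : Λ → Λ → Kˣ) (α : I → Λ)
    (hχ1 : ∀ a b c : Λ, χ (a + b) c = χ a c * χ b c)
    (hχ2 : ∀ a b c : Λ, χ a (b + c) = χ a b * χ a c) :
    ∃ (Δ : Util χ α →ₐ[K] (Util χ α ⊗[K] Util χ α))
      (ε : Util χ α →ₐ[K] K) (S : Util χ α →ₗ[K] Util χ α),
      -- values on generators
      (∀ a : Λ, Δ (uK χ α a) = uK χ α a ⊗ₜ[K] uK χ α a) ∧
      (∀ a : Λ, Δ (uL χ α a) = uL χ α a ⊗ₜ[K] uL χ α a) ∧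
      (∀ i : I, Δ (uE χ α i) = uE χ α i ⊗ₜ[K] 1 + uK χ α (α i) ⊗ₜ[K] uE χ α i) ∧
      (∀ i : I, Δ (uF χ α i) = uF χ α i ⊗ₜ[K] uL χ α (α i) + 1 ⊗ₜ[K] uF χ α i) ∧
      (∀ a : Λ, S (uK χ α a) = uK χ α (-a)) ∧
      (∀ a : Λ, S (uL χ α a) = uL χ α (-a)) ∧
      (∀ i : I, S (uE χ α i) = -(uK χ α (-(α i)) * uE χ α i)) ∧
      (∀ i : I, S (uF χ α i) = -(uF χ α i * uL χ α (-(α i)))) ∧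
      (∀ a : Λ, ε (uK χ α a) = 1) ∧ (∀ a : Λ, ε (uL χ α a) = 1) ∧
      (∀ i : I, ε (uE χ α i) = 0) ∧ (∀ i : I, ε (uF χ α i) = 0) ∧
      -- coassociativity
      (∀ x : Util χ α,
        (TensorProduct.assoc K (Util χ α) (Util χ α) (Util χ α))
            ((TensorProduct.map Δ.toLinearMap LinearMap.id) (Δ x))
          = (TensorProduct.map LinearMap.id Δ.toLinearMap) (Δ x)) ∧
      -- counit axioms
      (∀ x : Util χ α,
        (TensorProduct.lid K (Util χ α))
            ((TensorProduct.map ε.toLinearMap LinearMap.id) (Δ x)) = x) ∧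
      (∀ x : Util χ α,
        (TensorProduct.rid K (Util χ α))
            ((TensorProduct.map LinearMap.id ε.toLinearMap) (Δ x)) = x) ∧
      -- antipode axioms
      (∀ x : Util χ α,
        (LinearMap.mul' K (Util χ α)) ((TensorProduct.map S LinearMap.id) (Δ x))
          = algebraMap K (Util χ α) (ε x)) ∧
      (∀ x : Util χ α,
        (LinearMap.mul' K (Util χ α)) ((TensorProduct.map LinearMap.id S) (Δ x))
          = algebraMap K (Util χ α) (ε x)) :=
  stmt8_general χ α hχ1 hχ2
end
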